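/- arXiv:1508.06687 — 9 statements merged into one kernel-verified Lean document; each statement's English description precedes it below -/
import Mathlib

section
/- A family of vectors {φ_i}_{i=1}^M in R^N does phase retrieval if and only if it has the complement property, i.e., for every subset S ⊆ {1,...,M}, either {φ_i}_{i∈S} spans R^N or {φ_i}_{i∈S^c} spans R^N. -/
/-!
If neither `φ '' S` nor `φ '' Sᶜ` spans, choose nonzero `u ⊥ φ '' S` and `v ⊥ φ '' Sᶜ`. Every `φ i`
is orthogonal to `u` or to `v`, so `u + v` and `u - v` have the same measurements `|⟪·, φ i⟫|`,
although neither `u + v = u - v` nor `u + v = -(u - v)`. Conversely, if `x` and `y` have the same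
measurements, let `S` be the set of `i` with `⟪x, φ i⟫ = ⟪y, φ i⟫`; then `x - y ⊥ φ '' S` and
`x + y ⊥ φ '' Sᶜ`, and whichever of the two sets spans forces `x = y` or `x = -y`.
-/

open Submodule
open scoped InnerProductSpace

section Orthogonal

variable {𝕜 E : Type*} [RCLike 𝕜] [NormedAddCommGroup E] [InnerProductSpace 𝕜 E]

theorem mem_orthogonal_span_iff {s : Set E} {v : E} :
    v ∈ (span 𝕜 s)ᗮ ↔ ∀ u ∈ s, ⟪v, u⟫_𝕜 = 0 := by
  rw [mem_orthogonal']
  exact ⟨fun h u hu => h u (subset_span hu), fun h u hu => span_induction h (by simp)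
    (fun _ _ _ _ h₁ h₂ => by rw [inner_add_right, h₁, h₂, add_zero])
    (fun _ _ _ h => by rw [inner_smul_right, h, mul_zero]) hu⟩

theorem eq_zero_of_span_eq_top {s : Set E} (hs : span 𝕜 s = ⊤) {v : E}
    (hv : ∀ u ∈ s, ⟪v, u⟫_𝕜 = 0) : v = 0 := by
  simpa [hs] using mem_orthogonal_span_iff.2 hv

theorem exists_ne_zero_of_span_ne_top [FiniteDimensional 𝕜 E] {s : Set E} (hs : span 𝕜 s ≠ ⊤) :
    ∃ v ≠ 0, ∀ u ∈ s, ⟪v, u⟫_𝕜 = 0 := by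
  obtain ⟨v, hv, hv0⟩ := (Submodule.ne_bot_iff _).1 (mt orthogonal_eq_bot_iff.1 hs)
  exact ⟨v, hv0, mem_orthogonal_span_iff.1 hv⟩

end Orthogonal

variable {ι E : Type*} [NormedAddCommGroup E] [InnerProductSpace ℝ E]

def DoesPhaseRetrieval (φ : ι → E) : Prop :=
  ∀ x y : E, (∀ i, |⟪x, φ i⟫_ℝ| = |⟪y, φ i⟫_ℝ|) → x = y ∨ x = -y

def HasComplementProperty (φ : ι → E) : Prop :=
  ∀ S : Set ι, span ℝ (φ '' S) = ⊤ ∨ span ℝ (φ '' Sᶜ) = ⊤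

theorem abs_inner_add_eq_abs_inner_sub {u v w : E} (h : ⟪u, w⟫_ℝ = 0 ∨ ⟪v, w⟫_ℝ = 0) :
    |⟪u + v, w⟫_ℝ| = |⟪u - v, w⟫_ℝ| := by
  rcases h with h | h <;> simp [inner_add_left, inner_sub_left, h]

theorem DoesPhaseRetrieval.hasComplementProperty [FiniteDimensional ℝ E] {φ : ι → E}
    (h : DoesPhaseRetrieval φ) : HasComplementProperty φ := by
  intro S
  by_contra! hS
  obtain ⟨u, hu0, hu⟩ := exists_ne_zero_of_span_ne_top hS.1
  obtain ⟨v, hv0, hv⟩ := exists_ne_zero_of_span_ne_top hS.2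
  have hsame : ∀ i, |⟪u + v, φ i⟫_ℝ| = |⟪u - v, φ i⟫_ℝ| := fun i =>
    abs_inner_add_eq_abs_inner_sub <|
      (em (i ∈ S)).imp (fun hi => hu _ ⟨i, hi, rfl⟩) (fun hi => hv _ ⟨i, hi, rfl⟩)
  have := IsAddTorsionFree.of_isTorsionFree ℝ E
  rcases h _ _ hsame with h | h
  · rw [sub_eq_add_neg, add_right_inj] at h
    exact hv0 (self_eq_neg.1 h)
  · rw [neg_sub, sub_eq_neg_add, add_left_inj] at h
    exact hu0 (self_eq_neg.1 h)

theorem HasComplementProperty.doesPhaseRetrieval {φ : ι → E} (h : HasComplementProperty φ) :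
    DoesPhaseRetrieval φ := by
  intro x y hxy
  rcases h {i | ⟪x, φ i⟫_ℝ = ⟪y, φ i⟫_ℝ} with hS | hS
  · refine .inl (sub_eq_zero.1 (eq_zero_of_span_eq_top hS ?_))
    rintro _ ⟨i, hi, rfl⟩
    rw [inner_sub_left, sub_eq_zero.2 hi]
  · refine .inr (eq_neg_of_add_eq_zero_left (eq_zero_of_span_eq_top hS ?_))
    rintro _ ⟨i, hi, rfl⟩
    rw [inner_add_left, (abs_eq_abs.1 (hxy i)).resolve_left hi, neg_add_cancel]

theorem doesPhaseRetrieval_iff_hasComplementProperty [FiniteDimensional ℝ E] {φ : ι → E} :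
    DoesPhaseRetrieval φ ↔ HasComplementProperty φ :=
  ⟨DoesPhaseRetrieval.hasComplementProperty, HasComplementProperty.doesPhaseRetrieval⟩

theorem stmt_0 (M N : ℕ) (φ : Fin M → EuclideanSpace ℝ (Fin N)) :
    (∀ x y : EuclideanSpace ℝ (Fin N),
        (∀ i, |(inner ℝ x (φ i) : ℝ)| = |(inner ℝ y (φ i) : ℝ)|) → x = y ∨ x = -y)
    ↔ (∀ S : Finset (Fin M),
        Submodule.span ℝ (φ '' (S : Set (Fin M))) = ⊤ ∨
        Submodule.span ℝ (φ '' ((Sᶜ : Finset (Fin M)) : Set (Fin M))) = ⊤) :=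
  doesPhaseRetrieval_iff_hasComplementProperty.trans
    ⟨fun h S => by simpa using h S, fun h S => by classical simpa using h S.toFinset⟩
end

section
/- If a frame {φ_i}_{i=1}^{2N−1} in R^N has the complement property, then it is full spark. -/
/-!
Of two complementary index sets in `Fin (2N - 1)`, a set `S` of size `N` leaves only `N - 1`
vectors to its complement, too few to span `ℝ^N`; so the complement property forces `S` to span.
Then `N` spanning vectors in an `N`-dimensional space are linearly independent.
-/

open Module Submodule

section

variable {K V ι : Type*} [Field K] [AddCommGroup V] [Module K V]

theorem finrank_le_card_of_span_image_eq_top [Module.Finite K V] (φ : ι → V) (T : Finset ι)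
    (hT : span K (φ '' T) = ⊤) : finrank K V ≤ T.card := by
  rw [Set.image_eq_range] at hT
  simpa using finrank_le_of_span_eq_top hT

theorem linearIndependent_of_span_image_eq_top_of_card_eq_finrank (φ : ι → V) (S : Finset ι)
    (hS : span K (φ '' S) = ⊤) (hcard : S.card = finrank K V) :
    LinearIndependent K (fun i : S => φ i) := by
  rw [Set.image_eq_range] at hS
  exact linearIndependent_of_top_le_span_of_card_eq_finrank hS.ge (by simpa using hcard)

end

theorem stmt_2_general (N : ℕ) (φ : Fin (2 * N - 1) → EuclideanSpace ℝ (Fin N))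
    (hcp : ∀ S : Finset (Fin (2 * N - 1)),
      Submodule.span ℝ (φ '' (S : Set (Fin (2 * N - 1)))) = ⊤ ∨
      Submodule.span ℝ (φ '' ((Sᶜ : Finset (Fin (2 * N - 1))) : Set (Fin (2 * N - 1)))) = ⊤) :
    ∀ S : Finset (Fin (2 * N - 1)), S.card = N →
      LinearIndependent ℝ (fun i : S => φ i) := by
  intro S hS
  rcases N.eq_zero_or_pos with rfl | hN
  · have : IsEmpty S := by simpa using hS
    exact linearIndependent_empty_type
  have hdim : finrank ℝ (EuclideanSpace ℝ (Fin N)) = N := finrank_euclideanSpace_fin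
  have hcompl : Sᶜ.card < N := by
    rw [Finset.card_compl, Fintype.card_fin, hS]
    omega
  have hspan : span ℝ (φ '' S) = ⊤ := (hcp S).resolve_right fun h =>
    (finrank_le_card_of_span_image_eq_top φ _ h).not_gt (by omega)
  exact linearIndependent_of_span_image_eq_top_of_card_eq_finrank φ S hspan (by omega)

theorem stmt_2 (N : ℕ) (φ : Fin (2 * N - 1) → EuclideanSpace ℝ (Fin N))
    (hframe : Submodule.span ℝ (Set.range φ) = ⊤)
    (hcp : ∀ S : Finset (Fin (2 * N - 1)),
      Submodule.span ℝ (φ '' (S : Set (Fin (2 * N - 1)))) = ⊤ ∨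
      Submodule.span ℝ (φ '' ((Sᶜ : Finset (Fin (2 * N - 1))) : Set (Fin (2 * N - 1)))) = ⊤) :
    ∀ S : Finset (Fin (2 * N - 1)), S.card = N →
      LinearIndependent ℝ (fun i : S => φ i) :=
  stmt_2_general N φ hcp
end

section
/- Let P be an orthogonal projection of rank N on an M-dimensional Hilbert space H with orthonormal basis {e_i}_{i=1}^M. Then {Pe_i}_{i=1}^M is full spark (as a family in the N-dimensional space P(H)) if and only if for every subset I ⊆ {1,...,M} with |I| = M−N, the vectors {(I−P)e_i}_{i∈I} span (I−P)(H). -/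
/-!
For `S ⊆ {1, …, M}`, the vectors `P eᵢ` (`i ∈ S`) are independent iff `span {eᵢ | i ∈ S}` meets
`ker P` trivially. Taking orthogonal complements, with `(ker P)ᗮ = range P` for self-adjoint `P`
and `(span {eᵢ | i ∈ S})ᗮ = span {eᵢ | i ∉ S}`, this says `span {eᵢ | i ∉ S} + range P = H`.
As `range P = ker (I - P)`, that is exactly the statement that `I - P` maps
`span {eᵢ | i ∉ S}` onto `range (I - P)`. Finally `S ↦ Sᶜ` matches the `N`-subsets with the
`(M - N)`-subsets.
-/

open Submodule

theorem LinearIndependent.map_iff_disjoint_ker {R M M' ι : Type*} [Ring R] [AddCommGroup M]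
    [Module R M] [AddCommGroup M'] [Module R M'] {v : ι → M} (hv : LinearIndependent R v)
    (f : M →ₗ[R] M') :
    LinearIndependent R (f ∘ v) ↔ Disjoint (span R (Set.range v)) (LinearMap.ker f) :=
  ⟨range_ker_disjoint, hv.map⟩

section InnerProductSpace

variable {𝕜 E ι : Type*} [RCLike 𝕜] [NormedAddCommGroup E] [InnerProductSpace 𝕜 E]

theorem Submodule.codisjoint_orthogonal_iff_disjoint [FiniteDimensional 𝕜 E]
    (K L : Submodule 𝕜 E) : Codisjoint Kᗮ Lᗮ ↔ Disjoint K L := by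
  rw [codisjoint_iff, disjoint_iff, ← orthogonal_eq_bot_iff, ← inf_orthogonal,
    orthogonal_orthogonal, orthogonal_orthogonal]

variable [Fintype ι]

theorem OrthonormalBasis.orthogonal_span_image (e : OrthonormalBasis ι 𝕜 E) (s : Set ι) :
    (span 𝕜 (e '' s))ᗮ = span 𝕜 (e '' sᶜ) := by
  apply le_antisymm
  · intro x hx
    rw [← e.sum_repr' x]
    refine sum_mem fun i _ => ?_
    by_cases hi : i ∈ s
    · rw [inner_eq_zero_symm.mp ((mem_orthogonal' _ _).mp hx _ (subset_span ⟨i, hi, rfl⟩)),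
        zero_smul]
      exact zero_mem _
    · exact smul_mem _ _ (subset_span ⟨i, hi, rfl⟩)
  · rw [← isOrtho_iff_le, isOrtho_span]
    rintro _ ⟨i, hi, rfl⟩ _ ⟨j, hj, rfl⟩
    exact e.orthonormal.2 (ne_of_mem_of_not_mem hj hi).symm

theorem OrthonormalBasis.linearIndependent_proj_iff_span_compl_eq_range
    (e : OrthonormalBasis ι 𝕜 E) {P : E →ₗ[𝕜] E} (hsym : P.IsSymmetric)
    (hidem : IsIdempotentElem P) (s : Set ι) :
    LinearIndependent 𝕜 (fun i : s => P (e i)) ↔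
      span 𝕜 ((fun i => e i - P (e i)) '' sᶜ) = LinearMap.range (LinearMap.id - P) := by
  have := e.toBasis.finiteDimensional_of_finite
  calc LinearIndependent 𝕜 (fun i : s => P (e i))
      ↔ Disjoint (span 𝕜 (e '' s)) (LinearMap.ker P) := by
        rw [Set.image_eq_range]
        exact (e.orthonormal.linearIndependent.comp _ Subtype.val_injective).map_iff_disjoint_ker P
    _ ↔ Codisjoint (span 𝕜 (e '' sᶜ)) (LinearMap.range P) := by
        rw [← hsym.orthogonal_range, ← codisjoint_orthogonal_iff_disjoint, orthogonal_orthogonal,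
          e.orthogonal_span_image]
    _ ↔ map (LinearMap.id - P) (span 𝕜 (e '' sᶜ)) = LinearMap.range (LinearMap.id - P) := by
        rw [map_eq_range_iff, LinearMap.IsIdempotentElem.range_eq_ker hidem]
    _ ↔ _ := by
        rw [← span_image, Set.image_image]
        rfl

end InnerProductSpace

theorem stmt_4_general {𝕜 : Type*} [RCLike 𝕜] {H : Type*} [NormedAddCommGroup H]
    [InnerProductSpace 𝕜 H]
    (M N : ℕ)
    (e : OrthonormalBasis (Fin M) 𝕜 H)
    (P : H →ₗ[𝕜] H) (hsym : P.IsSymmetric) (hidem : P ∘ₗ P = P)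
    (hrank : Module.finrank 𝕜 (LinearMap.range P) = N) :
    (∀ S : Finset (Fin M), S.card = N →
        LinearIndependent 𝕜 (fun i : S => P (e i)))
    ↔ (∀ I : Finset (Fin M), I.card = M - N →
        Submodule.span 𝕜 ((fun i => e i - P (e i)) '' (I : Set (Fin M)))
          = LinearMap.range (LinearMap.id - P)) := by
  have key (S : Finset (Fin M)) := e.linearIndependent_proj_iff_span_compl_eq_range hsym hidem S
  have hNM : N ≤ M := by
    have := e.toBasis.finiteDimensional_of_finite
    simpa [hrank, Module.finrank_eq_card_basis e.toBasis] using
      (LinearMap.range P).finrank_le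
  constructor
  · intro h I hI
    have := (key Iᶜ).mp (h Iᶜ (by rw [Finset.card_compl, Fintype.card_fin]; omega))
    rwa [Finset.coe_compl, compl_compl] at this
  · intro h S hS
    refine (key S).mpr ?_
    rw [← Finset.coe_compl]
    exact h Sᶜ (by rw [Finset.card_compl, Fintype.card_fin, hS])

theorem stmt_4 {𝕜 : Type*} [RCLike 𝕜] {H : Type*} [NormedAddCommGroup H]
    [InnerProductSpace 𝕜 H] [FiniteDimensional 𝕜 H]
    (M N : ℕ) (hdim : Module.finrank 𝕜 H = M)
    (e : OrthonormalBasis (Fin M) 𝕜 H)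
    (P : H →ₗ[𝕜] H) (hsym : P.IsSymmetric) (hidem : P ∘ₗ P = P)
    (hrank : Module.finrank 𝕜 (LinearMap.range P) = N) :
    (∀ S : Finset (Fin M), S.card = N →
        LinearIndependent 𝕜 (fun i : S => P (e i)))
    ↔ (∀ I : Finset (Fin M), I.card = M - N →
        Submodule.span 𝕜 ((fun i => e i - P (e i)) '' (I : Set (Fin M)))
          = LinearMap.range (LinearMap.id - P)) :=
  stmt_4_general M N e P hsym hidem hrank
end

section
/- Let {φ_i}_{i=1}^N be a basis of an N-dimensional Hilbert space H, and let P be an orthogonal projection on H of rank M. Then {Pφ_i}_{i=1}^N is full spark on P(H) if and only if for every subset I ⊆ {1,...,N} with |I| = M, we have span{(I−P)φ_i : i = 1,...,N} ∩ span{φ_i : i ∈ I} = {0}. -/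
/-!
Since `P` is idempotent, the vectors `φ i - P (φ i)` span `ker P`. A linear map sends a linearly
independent family to a linearly independent one exactly when the family's span meets the kernel
trivially, so `{P φ i | i ∈ I}` is independent iff `span {φ i | i ∈ I} ⊓ ker P = ⊥`.
-/

section

open Submodule LinearMap

variable {R M M' ι : Type*} [Ring R] [AddCommGroup M] [Module R M] [AddCommGroup M'] [Module R M']

theorem IsIdempotentElem.span_range_sub_apply_eq_ker {p : M →ₗ[R] M} (hp : IsIdempotentElem p)
    {v : ι → M} (hv : span R (Set.range v) = ⊤) :
    span R (Set.range fun i => v i - p (v i)) = ker p := by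
  rw [hp.ker_eq_range, range_eq_map, ← hv, Submodule.map_span, ← Set.range_comp]
  rfl

theorem LinearIndependent.comp_linearMap_iff_disjoint_ker {v : ι → M}
    (hv : LinearIndependent R v) {f : M →ₗ[R] M'} :
    LinearIndependent R (f ∘ v) ↔ Disjoint (span R (Set.range v)) (ker f) :=
  ⟨range_ker_disjoint, hv.map⟩

theorem Module.Basis.linearIndependent_restrict_map_iff_disjoint_ker (b : Module.Basis ι R M)
    (f : M →ₗ[R] M') (s : Set ι) :
    LinearIndependent R (fun i : s => f (b i)) ↔ Disjoint (span R (b '' s)) (ker f) := by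
  rw [Set.image_eq_range]
  exact (b.linearIndependent.comp _ Subtype.val_injective).comp_linearMap_iff_disjoint_ker

end

theorem stmt_6_general {𝕜 : Type*} [RCLike 𝕜] {H : Type*} [NormedAddCommGroup H]
    [InnerProductSpace 𝕜 H]
    (N M : ℕ)
    (φ : Module.Basis (Fin N) 𝕜 H)
    (P : H →ₗ[𝕜] H) (hidem : P ∘ₗ P = P) :
    (∀ S : Finset (Fin N), S.card = M →
        LinearIndependent 𝕜 (fun i : S => P (φ i)))
    ↔ (∀ I : Finset (Fin N), I.card = M →
        Submodule.span 𝕜 (Set.range (fun i => φ i - P (φ i)))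
          ⊓ Submodule.span 𝕜 (φ '' (I : Set (Fin N))) = ⊥) := by
  have hker : Submodule.span 𝕜 (Set.range fun i => φ i - P (φ i)) = LinearMap.ker P :=
    IsIdempotentElem.span_range_sub_apply_eq_ker hidem φ.span_eq
  refine forall_congr' fun S => imp_congr_right fun _ =>
    (φ.linearIndependent_restrict_map_iff_disjoint_ker P S).trans ?_
  rw [hker, disjoint_iff, inf_comm]

theorem stmt_6 {𝕜 : Type*} [RCLike 𝕜] {H : Type*} [NormedAddCommGroup H]
    [InnerProductSpace 𝕜 H] [FiniteDimensional 𝕜 H]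
    (N M : ℕ) (hdim : Module.finrank 𝕜 H = N)
    (φ : Module.Basis (Fin N) 𝕜 H)
    (P : H →ₗ[𝕜] H) (hsym : P.IsSymmetric) (hidem : P ∘ₗ P = P)
    (hrank : Module.finrank 𝕜 (LinearMap.range P) = M) :
    (∀ S : Finset (Fin N), S.card = M →
        LinearIndependent 𝕜 (fun i : S => P (φ i)))
    ↔ (∀ I : Finset (Fin N), I.card = M →
        Submodule.span 𝕜 (Set.range (fun i => φ i - P (φ i)))
          ⊓ Submodule.span 𝕜 (φ '' (I : Set (Fin N))) = ⊥) :=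
  stmt_6_general N M φ P hidem
end

section
/- If {φ_i}_{i=1}^M does phase retrieval in a finite-dimensional Hilbert space H, then for every orthogonal projection P on H, the family {Pφ_i}_{i=1}^M does phase retrieval on P(H). -/
theorem LinearMap.IsSymmetric.inner_map_right_of_mem_range {𝕜 E : Type*} [RCLike 𝕜]
    [NormedAddCommGroup E] [InnerProductSpace 𝕜 E] {P : E →ₗ[𝕜] E} (hsym : P.IsSymmetric)
    (hidem : IsIdempotentElem P) {x : E} (hx : x ∈ LinearMap.range P) (v : E) :
    inner 𝕜 x (P v) = inner 𝕜 x v := by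
  rw [← hsym, (IsIdempotentElem.mem_range_iff hidem).mp hx]

theorem stmt_8_general {𝕜 : Type*} [RCLike 𝕜] {H : Type*} [NormedAddCommGroup H]
    [InnerProductSpace 𝕜 H]
    (M : ℕ) (φ : Fin M → H)
    (hpr : ∀ x y : H, (∀ i, ‖(inner 𝕜 x (φ i) : 𝕜)‖ = ‖(inner 𝕜 y (φ i) : 𝕜)‖) →
      ∃ c : 𝕜, ‖c‖ = 1 ∧ x = c • y)
    (P : H →ₗ[𝕜] H) (hsym : P.IsSymmetric) (hidem : P ∘ₗ P = P) :
    ∀ x y : H, x ∈ LinearMap.range P → y ∈ LinearMap.range P →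
      (∀ i, ‖(inner 𝕜 x (P (φ i)) : 𝕜)‖ = ‖(inner 𝕜 y (P (φ i)) : 𝕜)‖) →
      ∃ c : 𝕜, ‖c‖ = 1 ∧ x = c • y := by
  intro x y hx hy h
  refine hpr x y fun i => ?_
  rw [← hsym.inner_map_right_of_mem_range hidem hx, ← hsym.inner_map_right_of_mem_range hidem hy]
  exact h i

theorem stmt_8 {𝕜 : Type*} [RCLike 𝕜] {H : Type*} [NormedAddCommGroup H]
    [InnerProductSpace 𝕜 H] [FiniteDimensional 𝕜 H]
    (M : ℕ) (φ : Fin M → H)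
    (hpr : ∀ x y : H, (∀ i, ‖(inner 𝕜 x (φ i) : 𝕜)‖ = ‖(inner 𝕜 y (φ i) : 𝕜)‖) →
      ∃ c : 𝕜, ‖c‖ = 1 ∧ x = c • y)
    (P : H →ₗ[𝕜] H) (hsym : P.IsSymmetric) (hidem : P ∘ₗ P = P) :
    ∀ x y : H, x ∈ LinearMap.range P → y ∈ LinearMap.range P →
      (∀ i, ‖(inner 𝕜 x (P (φ i)) : 𝕜)‖ = ‖(inner 𝕜 y (P (φ i)) : 𝕜)‖) →
      ∃ c : 𝕜, ‖c‖ = 1 ∧ x = c • y :=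
  stmt_8_general M φ hpr P hsym hidem
end

section
/- Let P be an orthogonal projection onto an M-dimensional subspace W of a complex Hilbert space H of dimension N, and let x, y ∈ H. Then ‖Px‖ = ‖Py‖ if and only if there exists an orthonormal basis {φ_1,...,φ_M} of W such that |⟨x,φ_i⟩| = |⟨y,φ_i⟩| for all i = 1,...,M. -/
/-!
Since `⟪x, w⟫ = ⟪P x, w⟫` for `w ∈ W`, it suffices to compare two vectors `u, v` of a
finite-dimensional space by means of orthonormal bases of that space. If `|⟪u, eᵢ⟫| = |⟪v, eᵢ⟫|`
for an orthonormal basis, Parseval gives `‖u‖ = ‖v‖`. Conversely, if `‖u‖ = ‖v‖`, rotate `v` by a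
unimodular scalar `c` making `⟪u, c v⟫` real; then `u + c v ⊥ u - c v`. Extending
`(u + c v) / ‖u + c v‖` to an orthonormal basis, every basis vector `e` is orthogonal to `u + c v`
or to `u - c v`, so `⟪u, e⟫ = ∓⟪c v, e⟫`.
-/

open Module Submodule
open scoped InnerProductSpace

section
variable {𝕜 E : Type*} [RCLike 𝕜] [NormedAddCommGroup E] [InnerProductSpace 𝕜 E]

theorem exists_orthonormal_span_eq_iff_exists_orthonormalBasis {ι : Type*} [Fintype ι]
    (W : Submodule 𝕜 E) (p : (ι → E) → Prop) :
    (∃ φ : ι → E, Orthonormal 𝕜 φ ∧ (∀ i, φ i ∈ W) ∧ span 𝕜 (Set.range φ) = W ∧ p φ) ↔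
      ∃ b : OrthonormalBasis ι 𝕜 W, p fun i ↦ b i := by
  constructor
  · rintro ⟨φ, hφ, hmem, hspan, hp⟩
    have hspan' : span 𝕜 (Set.range (Set.codRestrict φ W hmem)) = ⊤ := by
      apply map_injective_of_injective W.injective_subtype
      rw [map_span, ← Set.range_comp, map_subtype_top]
      exact hspan
    exact ⟨.mk (hφ.codRestrict W hmem) hspan'.ge, by simpa using hp⟩
  · rintro ⟨b, hp⟩
    refine ⟨fun i ↦ b i, b.orthonormal.comp_linearIsometry W.subtypeₗᵢ, fun i ↦ (b i).2, ?_, hp⟩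
    have hb : span 𝕜 (Set.range b) = ⊤ := by simpa using b.toBasis.span_eq
    calc span 𝕜 (Set.range fun i ↦ (b i : E)) = (span 𝕜 (Set.range b)).map W.subtype := by
          rw [map_span, ← Set.range_comp]; rfl
      _ = W := by rw [hb, map_subtype_top]

theorem OrthonormalBasis.norm_eq_of_forall_norm_inner_eq {ι : Type*} [Fintype ι] (b : OrthonormalBasis ι 𝕜 E)
    {u v : E} (h : ∀ i, ‖⟪u, b i⟫_𝕜‖ = ‖⟪v, b i⟫_𝕜‖) : ‖u‖ = ‖v‖ := by
  rw [← sq_eq_sq₀ (norm_nonneg u) (norm_nonneg v), ← b.sum_sq_norm_inner_left,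
    ← b.sum_sq_norm_inner_left]
  simp only [h]

theorem exists_orthonormalBasis_inner_eq_zero_or [FiniteDimensional 𝕜 E] {n : ℕ}
    (hn : finrank 𝕜 E = n) {a d : E} (had : ⟪a, d⟫_𝕜 = 0) :
    ∃ b : OrthonormalBasis (Fin n) 𝕜 E, ∀ i, ⟪a, b i⟫_𝕜 = 0 ∨ ⟪d, b i⟫_𝕜 = 0 := by
  rcases eq_or_ne a 0 with rfl | ha
  · exact ⟨(stdOrthonormalBasis 𝕜 E).reindex (finCongr hn), fun _ ↦ .inl (inner_zero_left _)⟩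
  have : NeZero n := ⟨by
    subst hn; exact (finrank_pos_iff_exists_ne_zero.mpr ⟨a, ha⟩).ne'⟩
  set e : E := (‖a‖⁻¹ : 𝕜) • a
  have he : Orthonormal 𝕜 (({0} : Set (Fin n)).domRestrict fun _ ↦ e) := by
    rw [orthonormal_subsingleton_iff]
    intro _
    simp [Set.domRestrict, e, norm_smul, ha]
  obtain ⟨b, hb⟩ := he.exists_orthonormalBasis_extension_of_card_eq (by simpa using hn)
  have hb0 : b 0 = e := hb 0 rfl
  have ha_eq : a = (‖a‖ : 𝕜) • b 0 := by
    rw [hb0, smul_smul, mul_inv_cancel₀ (by simpa using ha), one_smul]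
  refine ⟨b, fun i ↦ ?_⟩
  rcases eq_or_ne i 0 with rfl | hi
  · right
    rw [hb0, inner_smul_right, ← inner_conj_symm, had, map_zero, mul_zero]
  · left
    rw [ha_eq, inner_smul_left, b.orthonormal.inner_eq_zero hi.symm, mul_zero]

theorem exists_norm_eq_one_inner_add_smul_sub_smul_eq_zero {u v : E} (h : ‖u‖ = ‖v‖) :
    ∃ c : 𝕜, ‖c‖ = 1 ∧ ⟪u + c • v, u - c • v⟫_𝕜 = 0 := by
  obtain ⟨c, hc, hct⟩ := RCLike.exists_norm_eq_mul_self ⟪u, v⟫_𝕜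
  have hcc : starRingEnd 𝕜 c * c = 1 := by rw [RCLike.conj_mul, hc]; simp
  have hct' : starRingEnd 𝕜 c * ⟪v, u⟫_𝕜 = ‖⟪u, v⟫_𝕜‖ := by
    rw [← inner_conj_symm, ← map_mul, ← hct, RCLike.conj_ofReal]
  refine ⟨c, hc, ?_⟩
  simp only [inner_add_left, inner_sub_right, inner_smul_left, inner_smul_right,
    inner_self_eq_norm_sq_to_K, h]
  linear_combination hct' + hct - ((‖v‖ : 𝕜) ^ 2) * hcc

theorem exists_orthonormalBasis_norm_inner_eq [FiniteDimensional 𝕜 E] {n : ℕ}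
    (hn : finrank 𝕜 E = n) {u v : E} (h : ‖u‖ = ‖v‖) :
    ∃ b : OrthonormalBasis (Fin n) 𝕜 E, ∀ i, ‖⟪u, b i⟫_𝕜‖ = ‖⟪v, b i⟫_𝕜‖ := by
  obtain ⟨c, hc, hperp⟩ := exists_norm_eq_one_inner_add_smul_sub_smul_eq_zero (𝕜 := 𝕜) h
  obtain ⟨b, hb⟩ := exists_orthonormalBasis_inner_eq_zero_or hn hperp
  refine ⟨b, fun i ↦ ?_⟩
  have hv : ‖⟪v, b i⟫_𝕜‖ = ‖⟪c • v, b i⟫_𝕜‖ := by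
    rw [inner_smul_left, norm_mul, RCLike.norm_conj, hc, one_mul]
  rw [hv]
  rcases hb i with h0 | h0
  · rw [inner_add_left, add_eq_zero_iff_eq_neg] at h0
    rw [h0, norm_neg]
  · rw [inner_sub_left, sub_eq_zero] at h0
    rw [h0]

end

theorem stmt_10_general {H : Type*} [NormedAddCommGroup H]
    [InnerProductSpace ℂ H] [FiniteDimensional ℂ H]
    (M : ℕ)
    (W : Submodule ℂ H) (hW : Module.finrank ℂ W = M)
    (x y : H) :
    ‖(Submodule.orthogonalProjection W x : W)‖ = ‖(Submodule.orthogonalProjection W y : W)‖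
    ↔ ∃ φ : Fin M → H,
        Orthonormal ℂ φ ∧ (∀ i, φ i ∈ W) ∧
        Submodule.span ℂ (Set.range φ) = W ∧
        ∀ i, ‖(inner ℂ x (φ i) : ℂ)‖ = ‖(inner ℂ y (φ i) : ℂ)‖ := by
  rw [exists_orthonormal_span_eq_iff_exists_orthonormalBasis W
    fun φ ↦ ∀ i, ‖⟪x, φ i⟫_ℂ‖ = ‖⟪y, φ i⟫_ℂ‖]
  simp only [← inner_orthogonalProjectionOnto_eq_of_mem_right]
  exact ⟨exists_orthonormalBasis_norm_inner_eq hW,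
    fun ⟨b, hb⟩ ↦ b.norm_eq_of_forall_norm_inner_eq hb⟩

theorem stmt_10 {H : Type*} [NormedAddCommGroup H]
    [InnerProductSpace ℂ H] [FiniteDimensional ℂ H]
    (N M : ℕ) (hdim : Module.finrank ℂ H = N)
    (W : Submodule ℂ H) (hW : Module.finrank ℂ W = M)
    (x y : H) :
    ‖(Submodule.orthogonalProjection W x : W)‖ = ‖(Submodule.orthogonalProjection W y : W)‖
    ↔ ∃ φ : Fin M → H,
        Orthonormal ℂ φ ∧ (∀ i, φ i ∈ W) ∧
        Submodule.span ℂ (Set.range φ) = W ∧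
        ∀ i, ‖(inner ℂ x (φ i) : ℂ)‖ = ‖(inner ℂ y (φ i) : ℂ)‖ :=
  stmt_10_general M W hW x y
end

section
/- Let {φ_i}_{i=1}^M be a frame for R^N and let k = N − min over all subsets I with span{φ_i}_{i∈I} ≠ R^N of dim(span{φ_i}_{i∈I^c}). Then if {ψ_j}_{j=1}^s ⊆ R^N is any finite family such that {φ_i}_{i=1}^M ∪ {ψ_j}_{j=1}^s has the complement property, then s ≥ k. -/
/-!
Take a non-spanning subfamily `{φ_i}_{i ∈ I}` whose complement spans a space of the minimal
dimension `N - k`. Applying the complement property to the partition of the extended family into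
`{φ_i}_{i ∈ I}` and the rest, the rest must span: so `span {φ_i}_{i ∉ I}` together with the `s`
added vectors spans `ℝ^N`, which forces `N ≤ (N - k) + s`.
-/

open Module

theorem Set.sumElim_image_compl_image_inl {ι κ α : Type*} (f : ι → α) (g : κ → α) (I : Set ι) :
    Sum.elim f g '' (Sum.inl '' I)ᶜ = f '' Iᶜ ∪ Set.range g := by
  ext x
  constructor
  · rintro ⟨i | j, hi, rfl⟩
    · exact Or.inl ⟨i, fun h ↦ hi ⟨i, h, rfl⟩, rfl⟩
    · exact Or.inr ⟨j, rfl⟩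
  · rintro (⟨i, hi, rfl⟩ | ⟨j, rfl⟩)
    · exact ⟨Sum.inl i, by simpa using hi, rfl⟩
    · exact ⟨Sum.inr j, by simp, rfl⟩

theorem Submodule.finrank_le_add_of_sup_eq_top {K V : Type*} [DivisionRing K] [AddCommGroup V]
    [Module K V] [FiniteDimensional K V] {A B : Submodule K V} (h : A ⊔ B = ⊤) :
    finrank K V ≤ finrank K A + finrank K B := by
  have := Submodule.finrank_add_le_finrank_add_finrank A B
  rwa [h, finrank_top] at this

theorem finrank_le_finrank_span_compl_add_card {K V ι κ : Type*} [DivisionRing K] [AddCommGroup V]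
    [Module K V] [FiniteDimensional K V] [Fintype ι] [Fintype κ] [DecidableEq ι] [DecidableEq κ]
    (φ : ι → V) (ψ : κ → V)
    (hcp : ∀ S : Finset (ι ⊕ κ),
      Submodule.span K (Sum.elim φ ψ '' (S : Set (ι ⊕ κ))) = ⊤ ∨
      Submodule.span K (Sum.elim φ ψ '' ((Sᶜ : Finset (ι ⊕ κ)) : Set (ι ⊕ κ))) = ⊤)
    (I : Finset ι) (hI : Submodule.span K (φ '' (I : Set ι)) ≠ ⊤) :
    finrank K V ≤
      finrank K (Submodule.span K (φ '' ((Iᶜ : Finset ι) : Set ι))) + Fintype.card κ := by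
  have hS : ((I.map .inl : Finset (ι ⊕ κ)) : Set (ι ⊕ κ)) = Sum.inl '' (I : Set ι) := by
    simp
  have hspan := (hcp (I.map .inl)).resolve_left (by
    rwa [hS, ← Set.image_comp, Sum.elim_comp_inl])
  rw [Finset.coe_compl, hS, Set.sumElim_image_compl_image_inl, Submodule.span_union,
    ← Finset.coe_compl] at hspan
  exact (Submodule.finrank_le_add_of_sup_eq_top hspan).trans
    (Nat.add_le_add_left (finrank_range_le_card ψ) _)

theorem stmt_14_general (M N k : ℕ) (φ : Fin M → EuclideanSpace ℝ (Fin N))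
    (hkN : k ≤ N)
    (hk : IsLeast {d : ℕ | ∃ I : Finset (Fin M),
        Submodule.span ℝ (φ '' (I : Set (Fin M))) ≠ ⊤ ∧
        Module.finrank ℝ (Submodule.span ℝ (φ '' ((Iᶜ : Finset (Fin M)) : Set (Fin M)))) = d}
      (N - k)) :
    ∀ (s : ℕ) (ψ : Fin s → EuclideanSpace ℝ (Fin N)),
      (∀ S : Finset (Fin M ⊕ Fin s),
        Submodule.span ℝ (Sum.elim φ ψ '' (S : Set (Fin M ⊕ Fin s))) = ⊤ ∨
        Submodule.span ℝ (Sum.elim φ ψ '' ((Sᶜ : Finset (Fin M ⊕ Fin s)) : Set (Fin M ⊕ Fin s))) = ⊤) →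
      k ≤ s := by
  intro s ψ hcp
  obtain ⟨I, hI, hIc⟩ := hk.1
  have h := finrank_le_finrank_span_compl_add_card φ ψ hcp I hI
  rw [finrank_euclideanSpace_fin, hIc, Fintype.card_fin] at h
  omega

theorem stmt_14 (M N k : ℕ) (φ : Fin M → EuclideanSpace ℝ (Fin N))
    (hframe : Submodule.span ℝ (Set.range φ) = ⊤)
    (hkN : k ≤ N)
    (hk : IsLeast {d : ℕ | ∃ I : Finset (Fin M),
        Submodule.span ℝ (φ '' (I : Set (Fin M))) ≠ ⊤ ∧
        Module.finrank ℝ (Submodule.span ℝ (φ '' ((Iᶜ : Finset (Fin M)) : Set (Fin M)))) = d}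
      (N - k)) :
    ∀ (s : ℕ) (ψ : Fin s → EuclideanSpace ℝ (Fin N)),
      (∀ S : Finset (Fin M ⊕ Fin s),
        Submodule.span ℝ (Sum.elim φ ψ '' (S : Set (Fin M ⊕ Fin s))) = ⊤ ∨
        Submodule.span ℝ (Sum.elim φ ψ '' ((Sᶜ : Finset (Fin M ⊕ Fin s)) : Set (Fin M ⊕ Fin s))) = ⊤) →
      k ≤ s :=
  stmt_14_general M N k φ hkN hk
end

section
/- Let {W_i}_{i=1}^M be subspaces of R^N which yield phase retrieval, but such that removing any single subspace destroys phase retrieval. Fix I ⊆ {1,...,M} with |I| = M−1, let {f_{i,j}}_{j=1}^{d_i} be orthonormal bases of W_i for i ∈ I, and suppose the index set is partitioned into I_1 and I_2 such that neither {f_{i,j}}_{(i,j)∈I_1} nor {f_{i,j}}_{(i,j)∈I_2} spans R^N. Then dim(span{f_{i,j}}_{(i,j)∈I_1}) = dim(span{f_{i,j}}_{(i,j)∈I_2}) = N−1. -/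
/-! If `U = span (F '' S)` had codimension at least 2, choose `v ≠ 0` orthogonal to
`V = span (F '' Sᶜ)`, then `u ≠ 0` orthogonal to `U` and to `P_m v`. Each `f i j` is orthogonal to
`u` or to `v`, so expanding in the orthonormal bases gives `⟪P_i u, P_i v⟫ = 0` for `i ≠ m`, and the
choice of `u` gives it for `i = m`. Then `‖P_i (u + v)‖ = ‖P_i (u - v)‖` for every `i`, and phase
retrieval forces `u = 0` or `v = 0`. -/

open Module Submodule
open scoped RealInnerProductSpace

section

variable {H : Type*} [NormedAddCommGroup H] [InnerProductSpace ℝ H]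

def YieldsPhaseRetrieval {ι : Type*} (W : ι → Submodule ℝ H)
    [∀ i, (W i).HasOrthogonalProjection] : Prop :=
  ∀ x y : H, (∀ i, ‖(W i).orthogonalProjectionOnto x‖ = ‖(W i).orthogonalProjectionOnto y‖) →
    x = y ∨ x = -y

theorem OrthonormalBasis.inner_orthogonalProjectionOnto_eq_sum {ι : Type*} [Fintype ι]
    {K : Submodule ℝ H} [K.HasOrthogonalProjection] (b : OrthonormalBasis ι ℝ K) (u v : H) :
    ⟪K.orthogonalProjectionOnto u, K.orthogonalProjectionOnto v⟫ =
      ∑ j, ⟪(b j : H), u⟫ * ⟪(b j : H), v⟫ := by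
  rw [← b.sum_inner_mul_inner]
  simp [real_inner_comm u]

theorem inner_orthogonalProjectionOnto_eq_sum_of_orthonormal {ι : Type*} [Fintype ι] {f : ι → H}
    (hf : Orthonormal ℝ f) {K : Submodule ℝ H} [K.HasOrthogonalProjection]
    (hK : span ℝ (Set.range f) = K) (u v : H) :
    ⟪K.orthogonalProjectionOnto u, K.orthogonalProjectionOnto v⟫ =
      ∑ j, ⟪f j, u⟫ * ⟪f j, v⟫ := by
  subst hK
  let b := (Basis.span hf.linearIndependent).toOrthonormalBasis <| by
    rw [show ⇑(Basis.span hf.linearIndependent) = _ from funext (Basis.span_apply _)]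
    exact orthonormal_span hf
  rw [b.inner_orthogonalProjectionOnto_eq_sum]
  simp [b, Basis.span_apply]

theorem inner_orthogonalProjectionOnto_eq_zero_of_orthonormal {ι : Type*} [Fintype ι]
    {f : ι → H} (hf : Orthonormal ℝ f) {K : Submodule ℝ H} [K.HasOrthogonalProjection]
    (hK : span ℝ (Set.range f) = K) {u v : H} (huv : ∀ j, ⟪f j, u⟫ = 0 ∨ ⟪f j, v⟫ = 0) :
    ⟪K.orthogonalProjectionOnto u, K.orthogonalProjectionOnto v⟫ = 0 := by
  rw [inner_orthogonalProjectionOnto_eq_sum_of_orthonormal hf hK]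
  refine Finset.sum_eq_zero fun j _ => ?_
  rcases huv j with h | h <;> simp [h]

theorem YieldsPhaseRetrieval.eq_zero_or_eq_zero {ι : Type*} {W : ι → Submodule ℝ H}
    [∀ i, (W i).HasOrthogonalProjection] (hW : YieldsPhaseRetrieval W) {u v : H}
    (huv : ∀ i, ⟪(W i).orthogonalProjectionOnto u, (W i).orthogonalProjectionOnto v⟫ = 0) :
    u = 0 ∨ v = 0 := by
  have hnorm : ∀ i, ‖(W i).orthogonalProjectionOnto (u + v)‖ =
      ‖(W i).orthogonalProjectionOnto (u - v)‖ := fun i => by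
    rw [map_add, map_sub, norm_sub_eq_norm_add (inner_eq_zero_symm.mp (huv i))]
  rcases hW _ _ hnorm with h | h
  · right
    linear_combination (norm := module) (2⁻¹ : ℝ) • h
  · left
    linear_combination (norm := module) (2⁻¹ : ℝ) • h

theorem exists_mem_ne_zero_inner_eq_zero {V : Submodule ℝ H} [FiniteDimensional ℝ V]
    (hV : 2 ≤ finrank ℝ V) (w : H) : ∃ u ∈ V, u ≠ 0 ∧ ⟪w, u⟫ = 0 := by
  let φ : V →ₗ[ℝ] ℝ := (innerSL ℝ w).toLinearMap ∘ₗ V.subtype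
  obtain ⟨u, hu, hu0⟩ := exists_mem_ne_zero_of_ne_bot <|
    φ.ker_ne_bot_of_finrank_lt (by rw [finrank_self]; omega)
  exact ⟨u, u.2, by simpa using hu0, hu⟩

theorem YieldsPhaseRetrieval.finrank_orthogonal_le_one [FiniteDimensional ℝ H] {ι : Type*}
    {W : ι → Submodule ℝ H} [∀ i, (W i).HasOrthogonalProjection] (hW : YieldsPhaseRetrieval W)
    (m : ι) {U V : Submodule ℝ H}
    (hUV : ∀ u ∈ Uᗮ, ∀ v ∈ Vᗮ, ∀ i ≠ m,
      ⟪(W i).orthogonalProjectionOnto u, (W i).orthogonalProjectionOnto v⟫ = 0)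
    (hV : V ≠ ⊤) : finrank ℝ Uᗮ ≤ 1 := by
  by_contra! hU
  obtain ⟨v, hv, hv0⟩ := exists_mem_ne_zero_of_ne_bot (mt orthogonal_eq_bot_iff.mp hV)
  obtain ⟨u, hu, hu0, huv⟩ := exists_mem_ne_zero_inner_eq_zero hU ((W m).orthogonalProjectionOnto v)
  have hproj : ∀ i, ⟪(W i).orthogonalProjectionOnto u, (W i).orthogonalProjectionOnto v⟫ = 0 := by
    intro i
    by_cases hi : i = m
    · subst hi
      rw [inner_orthogonalProjectionOnto_eq_of_mem_right, real_inner_comm, huv]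
    · exact hUV u hu v hv i hi
  rcases hW.eq_zero_or_eq_zero hproj with h | h
  exacts [hu0 h, hv0 h]

theorem YieldsPhaseRetrieval.finrank_eq_sub_one [FiniteDimensional ℝ H] {ι : Type*}
    {W : ι → Submodule ℝ H} [∀ i, (W i).HasOrthogonalProjection] (hW : YieldsPhaseRetrieval W)
    (m : ι) {U V : Submodule ℝ H}
    (hUV : ∀ u ∈ Uᗮ, ∀ v ∈ Vᗮ, ∀ i ≠ m,
      ⟪(W i).orthogonalProjectionOnto u, (W i).orthogonalProjectionOnto v⟫ = 0)
    (hU : U ≠ ⊤) (hV : V ≠ ⊤) : finrank ℝ U = finrank ℝ H - 1 := by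
  have hsum := U.finrank_add_finrank_orthogonal
  have hlt := finrank_lt hU
  have hle := hW.finrank_orthogonal_le_one m hUV hV
  omega

end

theorem stmt_17_general {H : Type*} [NormedAddCommGroup H] [InnerProductSpace ℝ H]
    [FiniteDimensional ℝ H]
    (N M : ℕ) (hdim : Module.finrank ℝ H = N)
    (W : Fin M → Submodule ℝ H)
    (hpr : ∀ x y : H,
      (∀ i, ‖((W i).orthogonalProjectionOnto x : W i)‖ = ‖((W i).orthogonalProjectionOnto y : W i)‖) →
      x = y ∨ x = -y)
    (m : Fin M) (d : {i : Fin M // i ≠ m} → ℕ)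
    (f : ∀ i : {i : Fin M // i ≠ m}, Fin (d i) → H)
    (horth : ∀ i, Orthonormal ℝ (f i))
    (hspan : ∀ i, Submodule.span ℝ (Set.range (f i)) = W (i : Fin M))
    (S : Set (Σ i : {i : Fin M // i ≠ m}, Fin (d i)))
    (h₁ : Submodule.span ℝ ((fun p : Σ i : {i : Fin M // i ≠ m}, Fin (d i) => f p.1 p.2) '' S) ≠ ⊤)
    (h₂ : Submodule.span ℝ ((fun p : Σ i : {i : Fin M // i ≠ m}, Fin (d i) => f p.1 p.2) '' Sᶜ) ≠ ⊤) :
    Module.finrank ℝ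
        (Submodule.span ℝ ((fun p : Σ i : {i : Fin M // i ≠ m}, Fin (d i) => f p.1 p.2) '' S))
      = N - 1 ∧
    Module.finrank ℝ
        (Submodule.span ℝ ((fun p : Σ i : {i : Fin M // i ≠ m}, Fin (d i) => f p.1 p.2) '' Sᶜ))
      = N - 1 := by
  set F : (Σ i : {i : Fin M // i ≠ m}, Fin (d i)) → H := fun p => f p.1 p.2
  have hcover : ∀ T : Set (Σ i : {i : Fin M // i ≠ m}, Fin (d i)),
      ∀ u ∈ (span ℝ (F '' T))ᗮ, ∀ v ∈ (span ℝ (F '' Tᶜ))ᗮ, ∀ i ≠ m,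
        ⟪(W i).orthogonalProjectionOnto u, (W i).orthogonalProjectionOnto v⟫ = 0 := by
    intro T u hu v hv i hi
    refine inner_orthogonalProjectionOnto_eq_zero_of_orthonormal (horth ⟨i, hi⟩) (hspan ⟨i, hi⟩)
      fun j => ?_
    by_cases hj : (⟨⟨i, hi⟩, j⟩ : Σ i : {i : Fin M // i ≠ m}, Fin (d i)) ∈ T
    · exact .inl <| inner_right_of_mem_orthogonal (subset_span (Set.mem_image_of_mem F hj)) hu
    · exact .inr <| inner_right_of_mem_orthogonal
        (subset_span (Set.mem_image_of_mem F (Set.mem_compl hj))) hv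
  have hW : YieldsPhaseRetrieval W := hpr
  subst hdim
  exact ⟨hW.finrank_eq_sub_one m (hcover S) h₁ h₂,
    hW.finrank_eq_sub_one m (by simpa only [compl_compl] using hcover Sᶜ) h₂ h₁⟩

theorem stmt_17 {H : Type*} [NormedAddCommGroup H] [InnerProductSpace ℝ H]
    [FiniteDimensional ℝ H]
    (N M : ℕ) (hdim : Module.finrank ℝ H = N)
    (W : Fin M → Submodule ℝ H)
    (hpr : ∀ x y : H,
      (∀ i, ‖((W i).orthogonalProjectionOnto x : W i)‖ = ‖((W i).orthogonalProjectionOnto y : W i)‖) →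
      x = y ∨ x = -y)
    (hfail : ∀ m : Fin M, ¬ (∀ x y : H,
      (∀ i, i ≠ m →
        ‖((W i).orthogonalProjectionOnto x : W i)‖ = ‖((W i).orthogonalProjectionOnto y : W i)‖) →
      x = y ∨ x = -y))
    (m : Fin M) (d : {i : Fin M // i ≠ m} → ℕ)
    (f : ∀ i : {i : Fin M // i ≠ m}, Fin (d i) → H)
    (hmem : ∀ i j, f i j ∈ W i.1)
    (horth : ∀ i, Orthonormal ℝ (f i))
    (hspan : ∀ i, Submodule.span ℝ (Set.range (f i)) = W (i : Fin M))
    (S : Set (Σ i : {i : Fin M // i ≠ m}, Fin (d i)))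
    (h₁ : Submodule.span ℝ ((fun p : Σ i : {i : Fin M // i ≠ m}, Fin (d i) => f p.1 p.2) '' S) ≠ ⊤)
    (h₂ : Submodule.span ℝ ((fun p : Σ i : {i : Fin M // i ≠ m}, Fin (d i) => f p.1 p.2) '' Sᶜ) ≠ ⊤) :
    Module.finrank ℝ
        (Submodule.span ℝ ((fun p : Σ i : {i : Fin M // i ≠ m}, Fin (d i) => f p.1 p.2) '' S))
      = N - 1 ∧
    Module.finrank ℝ
        (Submodule.span ℝ ((fun p : Σ i : {i : Fin M // i ≠ m}, Fin (d i) => f p.1 p.2) '' Sᶜ))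
      = N - 1 :=
  stmt_17_general N M hdim W hpr m d f horth hspan S h₁ h₂
end

section
/- Let {f_i}_{i=1}^M be vectors in R^N with the property that whenever {1,...,M} is partitioned into I_1 and I_2 with neither {f_i}_{i∈I_1} nor {f_i}_{i∈I_2} spanning R^N, each of the two families spans a hyperplane (an (N−1)-dimensional subspace). Then there exists a vector f_0 ∈ R^N such that {f_0, f_1,...,f_M} has the complement property (and hence does phase retrieval in R^N). -/
/-!
Over an infinite field a vector space is not a finite union of proper subspaces, so some `f₀`
lies outside the span of every subfamily of `f` that does not span. Given a partition of
`{f₀, f₁, …, f_M}`, let `I` be the part containing `f₀`. If neither part spanned, then neither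
would the corresponding parts of `f`, so by hypothesis the `f_i` with `i ∈ I` span a hyperplane
`H`; as `f₀ ∉ H`, the family indexed by `I` spans strictly more than `H`, i.e. everything.
-/

open Module Submodule

section

variable {K V : Type*} [DivisionRing K] [AddCommGroup V] [Module K V]

theorem exists_forall_notMem_span_image_of_ne_top [Infinite K] {ι : Type*} [Finite ι]
    (f : ι → V) : ∃ x : V, ∀ s : Set ι, span K (f '' s) ≠ ⊤ → x ∉ span K (f '' s) := by
  classical
  have := Fintype.ofFinite ι
  let proper : Finset (Submodule K V) :=
    {p ∈ Finset.univ.image fun s : Set ι => span K (f '' s) | p ≠ ⊤}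
  obtain ⟨x, hx⟩ := (Set.ne_univ_iff_exists_notMem _).1
    (Subspace.biUnion_ne_univ_of_top_notMem (s := proper) (by simp [proper]))
  exact ⟨x, fun s hs hxs => hx (Set.mem_biUnion (by simp [proper, hs]) hxs)⟩

theorem Submodule.eq_top_of_lt_of_finrank_eq_pred [FiniteDimensional K V] {P Q : Submodule K V}
    (hPQ : P < Q) (hP : finrank K P = finrank K V - 1) : Q = ⊤ := by
  have hlt := Submodule.finrank_lt_finrank_of_lt hPQ
  have hle := Q.finrank_le
  exact Submodule.eq_top_of_finrank_eq (by omega)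

theorem span_image_preimage_succ_le_span_image_cons {M : ℕ} (x : V) (f : Fin M → V)
    (A : Set (Fin (M + 1))) : span K (f '' (Fin.succ ⁻¹' A)) ≤ span K (Fin.cons x f '' A) := by
  refine span_mono ?_
  rintro _ ⟨i, hi, rfl⟩
  exact ⟨i.succ, hi, Fin.cons_succ (α := fun _ => V) x f i⟩

theorem span_image_cons_eq_top_of_zero_mem [FiniteDimensional K V] {M : ℕ} {f : Fin M → V}
    (hf : ∀ T : Finset (Fin M),
      span K (f '' (T : Set (Fin M))) ≠ ⊤ →
      span K (f '' ((Tᶜ : Finset (Fin M)) : Set (Fin M))) ≠ ⊤ →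
      finrank K (span K (f '' (T : Set (Fin M)))) = finrank K V - 1)
    {x : V} (hx : ∀ s : Set (Fin M), span K (f '' s) ≠ ⊤ → x ∉ span K (f '' s))
    {S : Finset (Fin (M + 1))} (h0 : 0 ∈ S)
    (hSc : span K (Fin.cons x f '' ((Sᶜ : Finset (Fin (M + 1))) : Set (Fin (M + 1)))) ≠ ⊤) :
    span K (Fin.cons x f '' (S : Set (Fin (M + 1)))) = ⊤ := by
  by_contra hS
  let T : Finset (Fin M) := S.preimage Fin.succ (Fin.succ_injective M).injOn
  have hT : span K (f '' (T : Set (Fin M))) ≤ span K (Fin.cons x f '' (S : Set (Fin (M + 1)))) := by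
    simpa [T] using span_image_preimage_succ_le_span_image_cons (K := K) x f S
  have hTc : span K (f '' ((Tᶜ : Finset (Fin M)) : Set (Fin M))) ≤
      span K (Fin.cons x f '' ((Sᶜ : Finset (Fin (M + 1))) : Set (Fin (M + 1)))) := by
    simpa [T] using span_image_preimage_succ_le_span_image_cons (K := K) x f (Sᶜ : Finset _)
  have hTne := ne_top_of_le_ne_top hS hT
  have hxS : x ∈ span K (Fin.cons x f '' (S : Set (Fin (M + 1)))) := subset_span ⟨0, h0, rfl⟩
  have hlt := lt_of_le_of_ne hT fun h => hx T hTne (h ▸ hxS)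
  exact hS (eq_top_of_lt_of_finrank_eq_pred hlt (hf T hTne (ne_top_of_le_ne_top hSc hTc)))

end

theorem stmt_18 (M N : ℕ) (f : Fin M → EuclideanSpace ℝ (Fin N))
    (hhyp : ∀ S : Finset (Fin M),
      Submodule.span ℝ (f '' (S : Set (Fin M))) ≠ ⊤ →
      Submodule.span ℝ (f '' ((Sᶜ : Finset (Fin M)) : Set (Fin M))) ≠ ⊤ →
      Module.finrank ℝ (Submodule.span ℝ (f '' (S : Set (Fin M)))) = N - 1 ∧
      Module.finrank ℝ (Submodule.span ℝ (f '' ((Sᶜ : Finset (Fin M)) : Set (Fin M)))) = N - 1) :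
    ∃ f₀ : EuclideanSpace ℝ (Fin N),
      ∀ S : Finset (Fin (M + 1)),
        Submodule.span ℝ (Fin.cons f₀ f '' (S : Set (Fin (M + 1)))) = ⊤ ∨
        Submodule.span ℝ (Fin.cons f₀ f '' ((Sᶜ : Finset (Fin (M + 1))) : Set (Fin (M + 1)))) = ⊤ := by
  have hf : ∀ T : Finset (Fin M), span ℝ (f '' (T : Set (Fin M))) ≠ ⊤ →
      span ℝ (f '' ((Tᶜ : Finset (Fin M)) : Set (Fin M))) ≠ ⊤ →
      finrank ℝ (span ℝ (f '' (T : Set (Fin M)))) = finrank ℝ (EuclideanSpace ℝ (Fin N)) - 1 := by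
    simpa only [finrank_euclideanSpace_fin] using fun T hT hTc => (hhyp T hT hTc).1
  obtain ⟨x, hx⟩ := exists_forall_notMem_span_image_of_ne_top (K := ℝ) f
  refine ⟨x, fun S => ?_⟩
  by_cases h0 : 0 ∈ S
  · exact or_iff_not_imp_right.2 (span_image_cons_eq_top_of_zero_mem hf hx h0)
  · exact or_iff_not_imp_left.2 fun hS => span_image_cons_eq_top_of_zero_mem hf hx
      (Finset.mem_compl.2 h0) (by rwa [compl_compl])
end
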